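/- arXiv:2106.05930 — 2 statements merged into one kernel-verified Lean document; each statement's English description precedes it below -/
import Mathlib

section
/- The complete bipartite graph K_{3,1} (equivalently, the join K_1 + ε_3) has spherical dimension 3, is minor minimal with respect to spherical dimension 3, and is, up to graph isomorphism, the unique simple graph on 4 vertices that is minor minimal with respect to spherical dimension 3. -/
/-- A unit-distance embedding of a simple graph `G` in `ℝⁿ`: an injective map sending
adjacent vertices to points at distance 1, such that no other vertex lies on the
closed segment between the endpoints of an edge. -/
def IsUDEmbedding {V : Type*} (G : SimpleGraph V) {n : ℕ}
    (f : V → EuclideanSpace ℝ (Fin n)) : Prop :=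
  Function.Injective f ∧
  (∀ ⦃u v⦄, G.Adj u v → dist (f u) (f v) = 1) ∧
  (∀ ⦃u v⦄, G.Adj u v → ∀ w, w ≠ u → w ≠ v → f w ∉ segment ℝ (f u) (f v))

/-- `G` has a unit-distance embedding in `ℝⁿ`. -/
def HasUDEmbedding {V : Type*} (G : SimpleGraph V) (n : ℕ) : Prop :=
  ∃ f : V → EuclideanSpace ℝ (Fin n), IsUDEmbedding G f

/-- `G` has a unit-distance embedding in `ℝⁿ` whose image lies on a sphere of radius `r`. -/
def HasSphericalEmbeddingRadius {V : Type*} (G : SimpleGraph V) (n : ℕ) (r : ℝ) : Prop :=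
  ∃ f : V → EuclideanSpace ℝ (Fin n), IsUDEmbedding G f ∧
    ∃ c : EuclideanSpace ℝ (Fin n), ∀ v, dist (f v) c = r

/-- `G` has a unit-distance embedding in `ℝⁿ` whose image lies on a sphere
of radius `0 < r < 1`. -/
def HasSphericalEmbedding {V : Type*} (G : SimpleGraph V) (n : ℕ) : Prop :=
  ∃ r : ℝ, 0 < r ∧ r < 1 ∧ HasSphericalEmbeddingRadius G n r

/-- The dimension of a graph: the least `n` such that `G` has a unit-distance
embedding in `ℝⁿ`. -/
noncomputable def graphDim {V : Type*} (G : SimpleGraph V) : ℕ :=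
  sInf {n | HasUDEmbedding G n}

/-- The spherical dimension of a graph: the least `n` such that `G` has a unit-distance
embedding in `ℝⁿ` on a sphere of radius strictly between 0 and 1.  By convention the
spherical dimension of a graph with at most one vertex is `0`. -/
noncomputable def sphericalDim {V : Type*} [Fintype V] (G : SimpleGraph V) : ℕ :=
  if Fintype.card V ≤ 1 then 0 else sInf {n | HasSphericalEmbedding G n}

/-- The join `G + H` of two graphs: disjoint union together with all edges between them. -/
def graphJoin {V W : Type*} (G : SimpleGraph V) (H : SimpleGraph W) :
    SimpleGraph (V ⊕ W) :=
  SimpleGraph.fromRel (fun x y =>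
    match x, y with
    | Sum.inl a, Sum.inl b => G.Adj a b
    | Sum.inr a, Sum.inr b => H.Adj a b
    | Sum.inl _, Sum.inr _ => True
    | Sum.inr _, Sum.inl _ => False)

/-- `H` is a minor of `G` (branch-set formulation, equivalent to being obtainable from `G`
by vertex deletions, edge deletions and edge contractions). -/
def IsMinorOf {W V : Type*} (H : SimpleGraph W) (G : SimpleGraph V) : Prop :=
  ∃ φ : W → Set V,
    (∀ w, (SimpleGraph.induce (φ w) G).Connected) ∧
    (Pairwise fun w w' => Disjoint (φ w) (φ w')) ∧
    (∀ ⦃w w'⦄, H.Adj w w' → ∃ x ∈ φ w, ∃ y ∈ φ w', G.Adj x y)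

/-- `H` is a proper minor of `G`: a minor that is not isomorphic to `G`. -/
def IsProperMinorOf {W V : Type*} (H : SimpleGraph W) (G : SimpleGraph V) : Prop :=
  IsMinorOf H G ∧ ¬ Nonempty (H ≃g G)

/-- `G` is minor minimal with respect to dimension `n`. -/
def MinorMinimalDim {V : Type*} (G : SimpleGraph V) (n : ℕ) : Prop :=
  graphDim G = n ∧
  ∀ (W : Type) [Fintype W] (H : SimpleGraph W), Nonempty W →
    IsProperMinorOf H G → graphDim H < n

/-- `G` is minor minimal with respect to spherical dimension `n`. -/
def MinorMinimalSDim {V : Type*} [Fintype V] (G : SimpleGraph V) (n : ℕ) : Prop :=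
  sphericalDim G = n ∧
  ∀ (W : Type) [Fintype W] (H : SimpleGraph W), Nonempty W →
    IsProperMinorOf H G → sphericalDim H < n

/-- The vertex type of the graph `Sₙ`. -/
def SType : ℕ → Type
  | 0 => Fin 0
  | 1 => Fin 1
  | 2 => Fin 2
  | 3 => Fin 3
  | (n + 4) => Fin (n + 1) ⊕ Fin 3

instance : (n : ℕ) → Fintype (SType n)
  | 0 => inferInstanceAs (Fintype (Fin 0))
  | 1 => inferInstanceAs (Fintype (Fin 1))
  | 2 => inferInstanceAs (Fintype (Fin 2))
  | 3 => inferInstanceAs (Fintype (Fin 3))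
  | (n + 4) => inferInstanceAs (Fintype (Fin (n + 1) ⊕ Fin 3))

/-- The graph `Sₙ`:  `S₁ = ε₁`, `S₂ = ε₂`, `S₃ = ε₃`, and `Sₙ = K_{n-3} + ε₃` for `n ≥ 4`. -/
def SGraph : (n : ℕ) → SimpleGraph (SType n)
  | 0 => ⊥
  | 1 => ⊥
  | 2 => ⊥
  | 3 => ⊥
  | (n + 4) => graphJoin (⊤ : SimpleGraph (Fin (n + 1))) (⊥ : SimpleGraph (Fin 3))



/-! On a sphere the segment condition of a unit-distance embedding is automatic by strict
convexity. A regular tetrahedron of edge 1 then carries every graph on at most four vertices on a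
sphere of radius `√(3/8)` in `ℝ³`. In the plane no vertex can have three neighbours: they would
lie both on the unit circle about it and on the circumscribed circle, and two distinct circles
meet in at most two points. A claw-free graph on four vertices, on the other hand, is a subgraph
of a 4-cycle or of a triangle plus a point, realised by the unit square and the unit equilateral
triangle, whose circumradii are below 1. So on at most four vertices the spherical dimension is 3
exactly when the graph contains a claw `K_{3,1}`. Every edge of a minor of a star passes through
the branch set of its centre, so no proper minor of `K_{3,1}` contains a claw; and a graph on four
vertices containing a claw has `K_{3,1}` as a minor, which minor minimality forces to be the
whole graph. -/

open SimpleGraph Metric Function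

section Sphere

lemma notMem_segment_of_mem_sphere {E : Type*} [NormedAddCommGroup E] [NormedSpace ℝ E]
    [StrictConvexSpace ℝ E] {c u v w : E} {r : ℝ} (hu : u ∈ sphere c r) (hv : v ∈ sphere c r)
    (hw : w ∈ sphere c r) (huv : u ≠ v) (hwu : w ≠ u) (hwv : w ≠ v) : w ∉ segment ℝ u v := by
  rw [← insert_endpoints_openSegment]
  rintro (rfl | rfl | hw')
  · exact hwu rfl
  · exact hwv rfl
  · have := openSegment_subset_ball_of_ne (sphere_subset_closedBall hu)
      (sphere_subset_closedBall hv) huv hw'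
    exact (mem_ball.1 this).ne (mem_sphere.1 hw)

variable {V V' : Type*} {G : SimpleGraph V} {n : ℕ}

lemma hasSphericalEmbedding_of_dist_eq {f : V → EuclideanSpace ℝ (Fin n)}
    {c : EuclideanSpace ℝ (Fin n)} {r : ℝ} (hr0 : 0 < r) (hr1 : r < 1) (hf : Injective f)
    (hsph : ∀ v, dist (f v) c = r) (hunit : ∀ ⦃u v⦄, G.Adj u v → dist (f u) (f v) = 1) :
    HasSphericalEmbedding G n :=
  ⟨r, hr0, hr1, f, ⟨hf, hunit, fun _ _ huv _ hwu hwv => notMem_segment_of_mem_sphere (hsph _)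
    (hsph _) (hsph _) (hf.ne (G.ne_of_adj huv)) (hf.ne hwu) (hf.ne hwv)⟩, c, hsph⟩

lemma HasSphericalEmbedding.of_isContained {G' : SimpleGraph V'}
    (h : HasSphericalEmbedding G' n) (hGG' : G ⊑ G') : HasSphericalEmbedding G n := by
  obtain ⟨ψ⟩ := hGG'
  obtain ⟨r, hr0, hr1, f, ⟨hf, hunit, -⟩, c, hsph⟩ := h
  exact hasSphericalEmbedding_of_dist_eq hr0 hr1 (hf.comp ψ.injective) (fun _ => hsph _)
    fun _ _ huv => hunit (ψ.toHom.map_adj huv)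

lemma card_le_one_of_hasSphericalEmbedding_zero [Fintype V] (h : HasSphericalEmbedding G 0) :
    Fintype.card V ≤ 1 := by
  obtain ⟨-, -, -, f, ⟨hf, -⟩, -⟩ := h
  exact Fintype.card_le_one_iff_subsingleton.2 hf.subsingleton

-- Points of a sphere in `ℝ¹` are told apart by their side of the centre.
lemma card_le_two_of_hasSphericalEmbedding_one [Fintype V] (h : HasSphericalEmbedding G 1) :
    Fintype.card V ≤ 2 := by
  obtain ⟨r, hr0, -, f, ⟨hf, -⟩, c, hsph⟩ := h
  have hcoord : ∀ v, f v 0 = c 0 + r ∨ f v 0 = c 0 - r := fun v => by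
    have hv : |f v 0 - c 0| = r := by
      rw [← hsph v, EuclideanSpace.dist_eq, Fin.sum_univ_one, Real.dist_eq,
        Real.sqrt_sq_eq_abs, abs_abs]
    rcases (abs_eq hr0.le).1 hv with hv | hv
    exacts [Or.inl (by linarith), Or.inr (by linarith)]
  have hside : Injective fun v => decide (c 0 < f v 0) := by
    intro u v huv
    refine hf (PiLp.ext fun i => ?_)
    rw [Subsingleton.elim i 0]
    rcases hcoord u with hu | hu <;> rcases hcoord v with hv | hv <;>
      simp only [hu, hv, decide_eq_decide] at huv ⊢ <;>
      first | rfl | (simp [hr0] at huv; linarith)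
  simpa using Fintype.card_le_of_injective _ hside

end Sphere

lemma EuclideanSpace.dist_eq_sqrt_iff {n : ℕ} {x y : EuclideanSpace ℝ (Fin n)} {s : ℝ}
    (hs : 0 ≤ s) : dist x y = √s ↔ ∑ i, (x i - y i) ^ 2 = s := by
  rw [EuclideanSpace.dist_eq, Real.sqrt_inj (by positivity) hs]
  simp [Real.dist_eq, sq_abs]

lemma EuclideanSpace.dist_eq_one_iff {n : ℕ} {x y : EuclideanSpace ℝ (Fin n)} :
    dist x y = 1 ↔ ∑ i, (x i - y i) ^ 2 = 1 := by
  rw [← dist_eq_sqrt_iff zero_le_one, Real.sqrt_one]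

def triangleGraph : SimpleGraph (Fin 4) := SimpleGraph.fromRel fun i j => i ≠ 3 ∧ j ≠ 3

instance : DecidableRel triangleGraph.Adj := fun _ _ => inferInstanceAs (Decidable (_ ∧ _))

noncomputable def squarePts : Fin 4 → EuclideanSpace ℝ (Fin 2) :=
  ![!₂[1/2, 1/2], !₂[1/2, -1/2], !₂[-1/2, -1/2], !₂[-1/2, 1/2]]

noncomputable def trianglePts : Fin 4 → EuclideanSpace ℝ (Fin 2) :=
  ![!₂[0, √3/3], !₂[1/2, -√3/6], !₂[-1/2, -√3/6], !₂[√3/3, 0]]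

noncomputable def tetrahedronPts : Fin 4 → EuclideanSpace ℝ (Fin 3) :=
  ![!₂[√2/4, √2/4, √2/4], !₂[√2/4, -√2/4, -√2/4], !₂[-√2/4, √2/4, -√2/4],
    !₂[-√2/4, -√2/4, √2/4]]

lemma hasSphericalEmbedding_cycleGraph_four : HasSphericalEmbedding (cycleGraph 4) 2 := by
  refine hasSphericalEmbedding_of_dist_eq (f := squarePts) (c := 0) (r := √(1/2))
    (by positivity) (by rw [Real.sqrt_lt' one_pos]; norm_num) ?_ ?_ ?_
  · intro i j h
    fin_cases i <;> fin_cases j <;> simp [squarePts] at h ⊢ <;> norm_num at h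
  · intro i
    rw [EuclideanSpace.dist_eq_sqrt_iff (by norm_num)]
    fin_cases i <;> simp [squarePts, Fin.sum_univ_two] <;> norm_num
  · intro i j h
    rw [EuclideanSpace.dist_eq_one_iff]
    fin_cases i <;> fin_cases j <;> first
      | exact absurd h (by decide)
      | simp [squarePts, Fin.sum_univ_two]; norm_num

lemma hasSphericalEmbedding_triangleGraph : HasSphericalEmbedding triangleGraph 2 := by
  refine hasSphericalEmbedding_of_dist_eq (f := trianglePts) (c := 0) (r := √(1/3))
    (by positivity) (by rw [Real.sqrt_lt' one_pos]; norm_num) ?_ ?_ ?_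
  · intro i j h
    fin_cases i <;> fin_cases j <;> simp [trianglePts] at h ⊢ <;>
      norm_num [eq_comm (a := (0 : ℝ))] at h
  · intro i
    rw [EuclideanSpace.dist_eq_sqrt_iff (by norm_num)]
    fin_cases i <;> simp [trianglePts, Fin.sum_univ_two] <;> ring_nf <;> norm_num
  · intro i j h
    rw [EuclideanSpace.dist_eq_one_iff]
    fin_cases i <;> fin_cases j <;> first
      | exact absurd h (by decide)
      | simp [trianglePts, Fin.sum_univ_two]; ring_nf; norm_num

lemma hasSphericalEmbedding_top_fin_four : HasSphericalEmbedding (⊤ : SimpleGraph (Fin 4)) 3 := by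
  have hunit : ∀ i j, i ≠ j → dist (tetrahedronPts i) (tetrahedronPts j) = 1 := by
    intro i j h
    rw [EuclideanSpace.dist_eq_one_iff]
    fin_cases i <;> fin_cases j <;> simp at h <;>
      simp [tetrahedronPts, Fin.sum_univ_three] <;> ring_nf <;> norm_num
  refine hasSphericalEmbedding_of_dist_eq (c := 0) (r := √(3/8))
    (by positivity) (by rw [Real.sqrt_lt' one_pos]; norm_num) ?_ ?_ fun i j h => hunit i j h
  · intro i j h
    by_contra hij
    simpa [h] using hunit i j hij
  · intro i
    rw [EuclideanSpace.dist_eq_sqrt_iff (by norm_num)]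
    fin_cases i <;> simp [tetrahedronPts, Fin.sum_univ_three] <;> ring_nf <;> norm_num

lemma hasSphericalEmbedding_three_of_card_le_four {V : Type*} [Fintype V] (G : SimpleGraph V)
    (hV : Fintype.card V ≤ 4) : HasSphericalEmbedding G 3 :=
  hasSphericalEmbedding_top_fin_four.of_isContained <| isContained_top_iff.2 <| by
    simpa using Function.Embedding.nonempty_of_card_le hV

section Claw

abbrev claw : SimpleGraph (Fin 1 ⊕ Fin 3) := graphJoin ⊤ ⊥

lemma claw_adj_iff {a b : Fin 1 ⊕ Fin 3} :
    claw.Adj a b ↔ a ≠ b ∧ (a = .inl 0 ∨ b = .inl 0) := by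
  rcases a with a | a <;> rcases b with b | b <;>
    simp [graphJoin, Fin.fin_one_eq_zero]

variable {V W : Type*} {G : SimpleGraph V}

lemma claw_isContained_iff : claw ⊑ G ↔
    ∃ v x y z, x ≠ y ∧ x ≠ z ∧ y ≠ z ∧ G.Adj v x ∧ G.Adj v y ∧ G.Adj v z := by
  constructor
  · rintro ⟨ψ⟩
    have hadj (i : Fin 3) : G.Adj (ψ (.inl 0)) (ψ (.inr i)) :=
      ψ.toHom.map_adj (claw_adj_iff.2 ⟨by simp, .inl rfl⟩)
    exact ⟨_, _, _, _, ψ.injective.ne (by decide), ψ.injective.ne (by decide),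
      ψ.injective.ne (by decide), hadj 0, hadj 1, hadj 2⟩
  · rintro ⟨v, x, y, z, hxy, hxz, hyz, hx, hy, hz⟩
    have hleaf : ∀ i, G.Adj v (![x, y, z] i) := by
      intro i; fin_cases i <;> assumption
    refine ⟨⟨⟨Sum.elim (fun _ => v) ![x, y, z], fun {a b} hab => ?_⟩, ?_⟩⟩
    · obtain ⟨hab, rfl | rfl⟩ := claw_adj_iff.1 hab
      · rcases b with b | b
        · exact absurd (congrArg _ (Subsingleton.elim 0 b)) hab
        · exact hleaf b
      · rcases a with a | a
        · exact absurd (congrArg _ (Subsingleton.elim a 0)) hab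
        · exact (hleaf a).symm
    · refine Injective.sumElim (fun _ _ _ => Subsingleton.elim _ _) ?_ ?_
      · intro i j h
        fin_cases i <;> fin_cases j <;> simp_all [eq_comm]
      · intro _ i
        fin_cases i <;> simp [hx.ne, hy.ne, hz.ne]

lemma claw_free_map (f : V ↪ W) (h : claw.Free G) : claw.Free (G.map f) := by
  rw [Free, claw_isContained_iff] at h ⊢
  rintro ⟨v, x, y, z, hxy, hxz, hyz, hx, hy, hz⟩
  simp only [map_adj] at hx hy hz
  obtain ⟨v₁, x, hx, rfl, rfl⟩ := hx
  obtain ⟨v₂, y, hy, hv₂, rfl⟩ := hy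
  obtain ⟨v₃, z, hz, hv₃, rfl⟩ := hz
  rw [f.injective hv₂] at hy
  rw [f.injective hv₃] at hz
  exact h ⟨v₁, x, y, z, ne_of_apply_ne f hxy, ne_of_apply_ne f hxz, ne_of_apply_ne f hyz,
    hx, hy, hz⟩

lemma not_hasSphericalEmbedding_claw_two : ¬ HasSphericalEmbedding claw 2 := by
  rintro ⟨r, hr0, -, f, ⟨hf, hunit, -⟩, c, hsph⟩
  have hcentre : c ≠ f (.inl 0) := by
    rintro rfl
    exact hr0.ne (by simpa using hsph (.inl 0))
  have hleaf (i : Fin 3) : dist (f (.inr i)) (f (.inl 0)) = 1 :=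
    hunit (claw_adj_iff.2 ⟨by simp, .inr rfl⟩)
  rcases EuclideanGeometry.eq_of_dist_eq_of_dist_eq_of_finrank_eq_two finrank_euclideanSpace_fin
      hcentre (hf.ne (by decide : (.inr 0 : Fin 1 ⊕ Fin 3) ≠ .inr 1)) (hsph _) (hsph _) (hsph _)
      (hleaf 0) (hleaf 1) (hleaf 2) with h | h <;>
    exact absurd (hf h) (by decide)

end Claw

-- Graphs on `Fin 4` coded by their six edge bits, so that the classification is a finite check.
def adjOfBits (b : Fin 6 → Bool) : Fin 4 → Fin 4 → Bool :=
  ![![false, b 0, b 1, b 2], ![b 0, false, b 3, b 4], ![b 1, b 3, false, b 5],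
    ![b 2, b 4, b 5, false]]

set_option maxRecDepth 10000 in
set_option synthInstance.maxHeartbeats 0 in
set_option synthInstance.maxSize 1000 in
lemma exists_relabel_cycleGraph_or_triangleGraph_of_bits : ∀ b : Fin 6 → Bool,
    (∀ v x y z : Fin 4, x ≠ y → x ≠ z → y ≠ z →
      adjOfBits b v x → adjOfBits b v y → adjOfBits b v z → False) →
    ∃ σ : Fin 4 → Fin 4, Injective σ ∧
      ((∀ i j, adjOfBits b i j → (cycleGraph 4).Adj (σ i) (σ j)) ∨
       (∀ i j, adjOfBits b i j → triangleGraph.Adj (σ i) (σ j))) := by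
  decide

lemma isContained_cycleGraph_or_triangleGraph (G : SimpleGraph (Fin 4)) (h : claw.Free G) :
    G ⊑ cycleGraph 4 ∨ G ⊑ triangleGraph := by
  classical
  let b : Fin 6 → Bool := ![G.Adj 0 1, G.Adj 0 2, G.Adj 0 3, G.Adj 1 2, G.Adj 1 3, G.Adj 2 3]
  have hb : ∀ i j, G.Adj i j ↔ adjOfBits b i j := by
    intro i j
    fin_cases i <;> fin_cases j <;> simp [adjOfBits, b] <;> exact G.adj_comm _ _
  rw [Free, claw_isContained_iff] at h
  obtain ⟨σ, hσ, hC | hT⟩ := exists_relabel_cycleGraph_or_triangleGraph_of_bits b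
    fun v x y z hxy hxz hyz hx hy hz =>
      h ⟨v, x, y, z, hxy, hxz, hyz, (hb _ _).2 hx, (hb _ _).2 hy, (hb _ _).2 hz⟩
  · exact .inl ⟨⟨⟨σ, fun hij => hC _ _ ((hb _ _).1 hij)⟩, hσ⟩⟩
  · exact .inr ⟨⟨⟨σ, fun hij => hT _ _ ((hb _ _).1 hij)⟩, hσ⟩⟩

lemma hasSphericalEmbedding_two_of_claw_free {V : Type*} [Fintype V] {G : SimpleGraph V}
    (hV : Fintype.card V ≤ 4) (h : claw.Free G) : HasSphericalEmbedding G 2 := by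
  obtain ⟨e⟩ : Nonempty (V ↪ Fin 4) := by simpa using Function.Embedding.nonempty_of_card_le hV
  have hmap : G ⊑ G.map e := (Embedding.map e G).isContained
  rcases isContained_cycleGraph_or_triangleGraph _ (claw_free_map e h) with hC | hT
  · exact hasSphericalEmbedding_cycleGraph_four.of_isContained (hmap.trans hC)
  · exact hasSphericalEmbedding_triangleGraph.of_isContained (hmap.trans hT)

section SphericalDim

variable {V : Type*} [Fintype V] {G : SimpleGraph V} {n : ℕ}

lemma sphericalDim_le (h : HasSphericalEmbedding G n) : sphericalDim G ≤ n := by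
  unfold sphericalDim
  split_ifs
  exacts [n.zero_le, Nat.sInf_le h]

lemma sphericalDim_eq (hV : 1 < Fintype.card V) (h : HasSphericalEmbedding G n)
    (hlt : ∀ m < n, ¬ HasSphericalEmbedding G m) : sphericalDim G = n := by
  rw [sphericalDim, if_neg hV.not_ge]
  exact le_antisymm (Nat.sInf_le h)
    (le_csInf ⟨n, h⟩ fun m hm => not_lt.1 fun hmn => hlt m hmn hm)

lemma sphericalDim_claw : sphericalDim claw = 3 := by
  refine sphericalDim_eq (by simp) (hasSphericalEmbedding_three_of_card_le_four _ (by simp)) ?_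
  intro m hm h
  interval_cases m
  · simpa using card_le_one_of_hasSphericalEmbedding_zero h
  · simpa using card_le_two_of_hasSphericalEmbedding_one h
  · exact not_hasSphericalEmbedding_claw_two h

lemma sphericalDim_lt_three_of_claw_free (hV : Fintype.card V ≤ 4) (h : claw.Free G) :
    sphericalDim G < 3 :=
  (sphericalDim_le (hasSphericalEmbedding_two_of_claw_free hV h)).trans_lt (by norm_num)

end SphericalDim

section Minor

variable {V W : Type*} {G : SimpleGraph V} {H : SimpleGraph W}

lemma IsMinorOf.card_le [Fintype V] [Fintype W] (h : IsMinorOf H G) :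
    Fintype.card W ≤ Fintype.card V := by
  obtain ⟨φ, hconn, hdisj, -⟩ := h
  have hne (w : W) : (φ w).Nonempty := by
    obtain ⟨t⟩ := (hconn w).nonempty
    exact ⟨t.1, t.2⟩
  choose rep hrep using hne
  refine Fintype.card_le_of_injective rep fun a b hab => ?_
  by_contra hne
  exact Set.disjoint_left.1 (hdisj hne) (hrep a) (hab ▸ hrep b)

lemma SimpleGraph.IsContained.isMinorOf (h : H ⊑ G) : IsMinorOf H G := by
  obtain ⟨ψ⟩ := h
  refine ⟨fun w => {ψ w}, fun w => ?_, fun _ _ hab => Set.disjoint_singleton.2 (ψ.injective.ne hab),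
    fun _ _ hab => ⟨_, rfl, _, rfl, ψ.toHom.map_adj hab⟩⟩
  rw [induce_singleton_eq_top]
  exact connected_top

/-- The branch set containing `c` meets every edge of `H`, so it is the branch set of `v`: the
branch sets of the two neighbours of `v` are disjoint. -/
lemma IsMinorOf.eq_or_eq_of_adj (hHG : IsMinorOf H G) {c : V}
    (hc : ∀ ⦃a b⦄, G.Adj a b → a = c ∨ b = c) {v x y : W} (hxy : x ≠ y) (hx : H.Adj v x)
    (hy : H.Adj v y) ⦃a b : W⦄ (hab : H.Adj a b) : a = v ∨ b = v := by
  obtain ⟨φ, -, hdisj, hedge⟩ := hHG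
  have touch : ∀ ⦃a b⦄, H.Adj a b → c ∈ φ a ∨ c ∈ φ b := fun a b h => by
    obtain ⟨p, hp, q, hq, hpq⟩ := hedge h
    rcases hc hpq with rfl | rfl
    exacts [.inl hp, .inr hq]
  have hv : c ∈ φ v := by
    by_contra hv
    exact Set.disjoint_left.1 (hdisj hxy) ((touch hx).resolve_left hv) ((touch hy).resolve_left hv)
  by_contra! hne
  rcases touch hab with h | h
  exacts [Set.disjoint_left.1 (hdisj hne.1) h hv, Set.disjoint_left.1 (hdisj hne.2) h hv]

noncomputable def SimpleGraph.Copy.isoOfBijective {A : SimpleGraph V} {B : SimpleGraph W}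
    (f : Copy A B) (hf : Bijective f) (hadj : ∀ a b, B.Adj (f a) (f b) → A.Adj a b) : A ≃g B where
  toEquiv := Equiv.ofBijective f hf
  map_rel_iff' := ⟨hadj _ _, f.toHom.map_adj⟩

lemma nonempty_claw_iso_of_isMinorOf [Fintype W] (hminor : IsMinorOf H claw) (hclaw : claw ⊑ H) :
    Nonempty (claw ≃g H) := by
  obtain ⟨ψ⟩ := hclaw
  have hbij : Bijective ψ := (Fintype.bijective_iff_injective_and_card ψ).2
    ⟨ψ.injective, le_antisymm (Fintype.card_le_of_injective ψ ψ.injective) hminor.card_le⟩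
  have hleaf (i : Fin 3) : H.Adj (ψ (.inl 0)) (ψ (.inr i)) :=
    ψ.toHom.map_adj (claw_adj_iff.2 ⟨by simp, .inl rfl⟩)
  have hstar := hminor.eq_or_eq_of_adj (fun _ _ h => (claw_adj_iff.1 h).2)
    (ψ.injective.ne (by decide : (.inr 0 : Fin 1 ⊕ Fin 3) ≠ .inr 1)) (hleaf 0) (hleaf 1)
  refine ⟨ψ.isoOfBijective hbij fun a b hab => claw_adj_iff.2 ⟨?_, ?_⟩⟩
  · rintro rfl
    exact H.loopless.irrefl _ hab
  · exact (hstar hab).imp (fun h => ψ.injective h) (fun h => ψ.injective h)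

end Minor

/-- `K_{3,1}` (that is, `K₁ + ε₃`) has spherical dimension 3, is minor minimal
with respect to spherical dimension 3, and is the unique simple graph on 4 vertices (up to
isomorphism) that is minor minimal with respect to spherical dimension 3. -/
theorem stmt5 :
    sphericalDim (graphJoin (⊤ : SimpleGraph (Fin 1)) (⊥ : SimpleGraph (Fin 3))) = 3 ∧
    MinorMinimalSDim (graphJoin (⊤ : SimpleGraph (Fin 1)) (⊥ : SimpleGraph (Fin 3))) 3 ∧
    ∀ (W : Type) [Fintype W] (H : SimpleGraph W), Fintype.card W = 4 →
      MinorMinimalSDim H 3 →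
      Nonempty (H ≃g graphJoin (⊤ : SimpleGraph (Fin 1)) (⊥ : SimpleGraph (Fin 3))) := by
  refine ⟨sphericalDim_claw, ⟨sphericalDim_claw, ?_⟩, ?_⟩
  · rintro W _ H - ⟨hminor, hniso⟩
    by_cases hclaw : claw ⊑ H
    · exact absurd ((nonempty_claw_iso_of_isMinorOf hminor hclaw).map .symm) hniso
    · exact sphericalDim_lt_three_of_claw_free (hminor.card_le.trans (by simp)) hclaw
  · rintro W _ H hcard ⟨hdim, hmin⟩
    by_cases hclaw : claw ⊑ H
    · by_contra hniso
      have := hmin _ claw ⟨.inl 0⟩ ⟨hclaw.isMinorOf, fun ⟨e⟩ => hniso ⟨e.symm⟩⟩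
      rw [sphericalDim_claw] at this
      exact this.false
    · exact absurd hdim (sphericalDim_lt_three_of_claw_free hcard.le hclaw).ne
end

section
/- Let G and H be finite simple graphs, each with more than one vertex. (i) If for some n₁, n₂ there are a unit-distance embedding of G in ℝ^{n₁} whose image lies on a sphere of radius r₁ with 0 < r₁ < 1 and a unit-distance embedding of H in ℝ^{n₂} whose image lies on a sphere of radius r₂ with 0 < r₂ < 1 such that r₁² + r₂² = 1, then G + H has a unit-distance embedding in ℝ^{n₁ + n₂}. (ii) Conversely, if G + H has a unit-distance embedding in ℝⁿ, then there exist n₁ and n₂ with n₁ + n₂ = n and unit-distance embeddings of G in ℝ^{n₁} and of H in ℝ^{n₂} on spheres of radii r₁, r₂ ∈ (0,1) with r₁² + r₂² = 1. -/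
/-!
Placing the two spherical embeddings, recentred at the origin, in complementary coordinate
subspaces of `ℝ^{n₁+n₂}` puts every vertex of `G` at distance `√(r₁² + r₂²) = 1` from every
vertex of `H`, and the orthogonality of the two pieces rules out any vertex on a segment it
should avoid.

Conversely, in an embedding of `G + H` all cross distances are 1, which forces every difference
of two `G`-vertices to be orthogonal to every difference of two `H`-vertices. With `U` the
direction of the affine span of the `G`-vertices and `c` the foot of the perpendicular from an
`H`-vertex to that span, the `G`-vertices lie in `c + U` and the `H`-vertices in `c + Uᗮ`;
Pythagoras then puts both on spheres about `c` with `r₁² + r₂² = 1`, and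
`dim U + dim Uᗮ = n`.
-/

open Set
open scoped RealInnerProductSpace

section GraphJoin

variable {V W : Type*} {G : SimpleGraph V} {H : SimpleGraph W}

@[simp]
theorem graphJoin_adj_inl_inl {u v : V} :
    (graphJoin G H).Adj (.inl u) (.inl v) ↔ G.Adj u v := by
  simp [graphJoin, G.adj_comm, and_iff_right_of_imp G.ne_of_adj]

@[simp]
theorem graphJoin_adj_inr_inr {u v : W} :
    (graphJoin G H).Adj (.inr u) (.inr v) ↔ H.Adj u v := by
  simp [graphJoin, H.adj_comm, and_iff_right_of_imp H.ne_of_adj]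

@[simp]
theorem graphJoin_adj_inl_inr {v : V} {w : W} : (graphJoin G H).Adj (.inl v) (.inr w) := by
  simp [graphJoin]

end GraphJoin

theorem AffineIsometry.mem_segment_map_iff {E F : Type*} [NormedAddCommGroup E] [NormedSpace ℝ E]
    [NormedAddCommGroup F] [NormedSpace ℝ F] (ψ : E →ᵃⁱ[ℝ] F) {x y z : E} :
    ψ z ∈ segment ℝ (ψ x) (ψ y) ↔ z ∈ segment ℝ x y := by
  rw [← ψ.coe_toAffineMap, ← image_segment, ψ.coe_toAffineMap, ψ.injective.mem_set_image]

section Segment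

variable {E : Type*} [NormedAddCommGroup E] [InnerProductSpace ℝ E] {x y z : E}

theorem eq_left_of_mem_segment_of_inner_eq_zero (hz : z ∈ segment ℝ x y) (hxy : ⟪x, y⟫ = 0)
    (hzy : ⟪z, y⟫ = 0) (hy : y ≠ 0) : z = x := by
  obtain ⟨a, b, -, -, hab, rfl⟩ := hz
  have hb : b = 0 := by
    simp only [inner_add_left, real_inner_smul_left, hxy, real_inner_self_eq_norm_sq] at hzy
    have : ‖y‖ ^ 2 ≠ 0 := by positivity
    simpa [this] using hzy
  obtain rfl : a = 1 := by linarith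
  simp [hb]

theorem eq_zero_of_mem_segment_of_inner_eq_zero (hz : z ∈ segment ℝ x y) (hxz : ⟪x, z⟫ = 0)
    (hyz : ⟪y, z⟫ = 0) : z = 0 := by
  obtain ⟨a, b, -, -, -, hz⟩ := hz
  rw [← inner_self_eq_zero (𝕜 := ℝ)]
  nth_rewrite 1 [← hz]
  simp only [inner_add_left, real_inner_smul_left, hxz, hyz, mul_zero, add_zero]

end Segment

theorem AffineIsometry.isUDEmbedding_comp_iff {V : Type*} {G : SimpleGraph V} {m n : ℕ}
    (ψ : EuclideanSpace ℝ (Fin m) →ᵃⁱ[ℝ] EuclideanSpace ℝ (Fin n))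
    {f : V → EuclideanSpace ℝ (Fin m)} : IsUDEmbedding G (ψ ∘ f) ↔ IsUDEmbedding G f := by
  simp only [IsUDEmbedding, ψ.injective.of_comp_iff, Function.comp_apply, ψ.dist_map,
    ψ.mem_segment_map_iff]

theorem hasSphericalEmbeddingRadius_iff_exists_norm_eq {V : Type*} {G : SimpleGraph V} {n : ℕ}
    {r : ℝ} : HasSphericalEmbeddingRadius G n r ↔
      ∃ f : V → EuclideanSpace ℝ (Fin n), IsUDEmbedding G f ∧ ∀ v, ‖f v‖ = r := by
  constructor
  · rintro ⟨f, hf, c, hc⟩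
    refine ⟨fun v => f v - c, ?_, fun v => by simpa [dist_eq_norm] using hc v⟩
    rw [← (AffineIsometryEquiv.vaddConst ℝ c).toAffineIsometry.isUDEmbedding_comp_iff]
    convert hf
    ext1 v
    simp
  · rintro ⟨f, hf, hr⟩
    exact ⟨f, hf, 0, by simpa using hr⟩

namespace IsUDEmbedding

variable {V W : Type*} {G : SimpleGraph V} {H : SimpleGraph W} {n : ℕ}

theorem graphJoin_inl {F : V ⊕ W → EuclideanSpace ℝ (Fin n)}
    (hF : IsUDEmbedding (graphJoin G H) F) : IsUDEmbedding G (F ∘ Sum.inl) :=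
  ⟨hF.1.comp Sum.inl_injective, fun _ _ h => hF.2.1 (graphJoin_adj_inl_inl.2 h),
    fun _ _ h w hu hv => hF.2.2 (graphJoin_adj_inl_inl.2 h) (.inl w) (by simpa) (by simpa)⟩

theorem graphJoin_inr {F : V ⊕ W → EuclideanSpace ℝ (Fin n)}
    (hF : IsUDEmbedding (graphJoin G H) F) : IsUDEmbedding H (F ∘ Sum.inr) :=
  ⟨hF.1.comp Sum.inr_injective, fun _ _ h => hF.2.1 (graphJoin_adj_inr_inr.2 h),
    fun _ _ h w hu hv => hF.2.2 (graphJoin_adj_inr_inr.2 h) (.inr w) (by simpa) (by simpa)⟩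

theorem sumElim {A : V → EuclideanSpace ℝ (Fin n)} {B : W → EuclideanSpace ℝ (Fin n)}
    (hA : IsUDEmbedding G A) (hB : IsUDEmbedding H B) {r₁ r₂ : ℝ} (hA_norm : ∀ v, ‖A v‖ = r₁)
    (hB_norm : ∀ w, ‖B w‖ = r₂) (hr₁ : 0 < r₁) (hr₂ : 0 < r₂) (hr : r₁ ^ 2 + r₂ ^ 2 = 1)
    (hAB : ∀ v w, ⟪A v, B w⟫ = 0) : IsUDEmbedding (graphJoin G H) (Sum.elim A B) := by
  have hA0 (v : V) : A v ≠ 0 := norm_pos_iff.1 (hA_norm v ▸ hr₁)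
  have hB0 (w : W) : B w ≠ 0 := norm_pos_iff.1 (hB_norm w ▸ hr₂)
  have hBA (v : V) (w : W) : ⟪B w, A v⟫ = 0 := by rw [real_inner_comm]; exact hAB v w
  have hA_ne_B (v : V) (w : W) : A v ≠ B w := fun h =>
    hA0 v (inner_self_eq_zero.1 (by nth_rewrite 2 [h]; exact hAB v w))
  have hdist (v : V) (w : W) : dist (A v) (B w) = 1 := by
    rw [dist_eq_norm, ← pow_eq_one_iff_of_nonneg (norm_nonneg _) two_ne_zero, sq,
      norm_sub_sq_eq_norm_sq_add_norm_sq_real (hAB v w), hA_norm, hB_norm, ← hr]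
    ring
  have hseg (u : V) (x : W) (z : V ⊕ W) (hu : z ≠ .inl u) (hx : z ≠ .inr x) :
      Sum.elim A B z ∉ segment ℝ (A u) (B x) := by
    rcases z with v | y <;> intro hz
    · exact hu (congrArg _ (hA.1
        (eq_left_of_mem_segment_of_inner_eq_zero hz (hAB u x) (hAB v x) (hB0 x))))
    · rw [segment_symm] at hz
      exact hx (congrArg _ (hB.1
        (eq_left_of_mem_segment_of_inner_eq_zero hz (hBA u x) (hBA u y) (hA0 u))))
  refine ⟨?_, ?_, ?_⟩
  · rintro (v | w) (v' | w') h
    · exact congrArg _ (hA.1 h)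
    · exact absurd h (hA_ne_B v w')
    · exact absurd h.symm (hA_ne_B v' w)
    · exact congrArg _ (hB.1 h)
  · rintro (u | x) (u' | x') h
    · exact hA.2.1 (graphJoin_adj_inl_inl.1 h)
    · exact hdist u x'
    · exact (dist_comm _ _).trans (hdist u' x)
    · exact hB.2.1 (graphJoin_adj_inr_inr.1 h)
  · rintro (u | x) (u' | x') h z hz₁ hz₂
    · rcases z with v | y <;> intro hz
      · exact hA.2.2 (graphJoin_adj_inl_inl.1 h) v (by simpa using hz₁) (by simpa using hz₂) hz
      · exact hB0 y (eq_zero_of_mem_segment_of_inner_eq_zero hz (hAB u y) (hAB u' y))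
    · exact hseg u x' z hz₁ hz₂
    · rw [segment_symm]
      exact hseg u' x z hz₂ hz₁
    · rcases z with v | y <;> intro hz
      · exact hA0 v (eq_zero_of_mem_segment_of_inner_eq_zero hz (hBA v x) (hBA v x'))
      · exact hB.2.2 (graphJoin_adj_inr_inr.1 h) y (by simpa using hz₁) (by simpa using hz₂) hz

end IsUDEmbedding

namespace EuclideanSpace

variable (m k : ℕ)

noncomputable def inlₗᵢ : EuclideanSpace ℝ (Fin m) →ₗᵢ[ℝ] EuclideanSpace ℝ (Fin (m + k)) where
  toFun x := WithLp.toLp 2 (Fin.append x.ofLp 0)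
  map_add' x y := by
    ext i
    induction i using Fin.addCases <;> simp
  map_smul' c x := by
    ext i
    induction i using Fin.addCases <;> simp
  norm_map' x := by
    simp [EuclideanSpace.norm_eq, Fin.sum_univ_add]

noncomputable def inrₗᵢ : EuclideanSpace ℝ (Fin k) →ₗᵢ[ℝ] EuclideanSpace ℝ (Fin (m + k)) where
  toFun y := WithLp.toLp 2 (Fin.append 0 y.ofLp)
  map_add' x y := by
    ext i
    induction i using Fin.addCases <;> simp
  map_smul' c x := by
    ext i
    induction i using Fin.addCases <;> simp
  norm_map' y := by
    simp [EuclideanSpace.norm_eq, Fin.sum_univ_add]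

variable {m k}

theorem inner_inlₗᵢ_inrₗᵢ (x : EuclideanSpace ℝ (Fin m)) (y : EuclideanSpace ℝ (Fin k)) :
    ⟪inlₗᵢ m k x, inrₗᵢ m k y⟫ = 0 := by
  simp [inlₗᵢ, inrₗᵢ, PiLp.inner_apply, Fin.sum_univ_add]

end EuclideanSpace

theorem hasUDEmbedding_graphJoin {V W : Type*} {G : SimpleGraph V} {H : SimpleGraph W}
    {n₁ n₂ : ℕ} {r₁ r₂ : ℝ} (hr₁ : 0 < r₁) (hr₂ : 0 < r₂) (hr : r₁ ^ 2 + r₂ ^ 2 = 1)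
    (hG : HasSphericalEmbeddingRadius G n₁ r₁) (hH : HasSphericalEmbeddingRadius H n₂ r₂) :
    HasUDEmbedding (graphJoin G H) (n₁ + n₂) := by
  obtain ⟨f, hf, hf_norm⟩ := hasSphericalEmbeddingRadius_iff_exists_norm_eq.1 hG
  obtain ⟨g, hg, hg_norm⟩ := hasSphericalEmbeddingRadius_iff_exists_norm_eq.1 hH
  let ι₁ := EuclideanSpace.inlₗᵢ n₁ n₂
  let ι₂ := EuclideanSpace.inrₗᵢ n₁ n₂
  exact ⟨_, IsUDEmbedding.sumElim (ι₁.toAffineIsometry.isUDEmbedding_comp_iff.2 hf)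
    (ι₂.toAffineIsometry.isUDEmbedding_comp_iff.2 hg) (by simpa using hf_norm)
    (by simpa using hg_norm) hr₁ hr₂ hr fun v w => EuclideanSpace.inner_inlₗᵢ_inrₗᵢ (f v) (g w)⟩

theorem pos_of_injective_of_norm_sub_eq {E V : Type*} [NormedAddCommGroup E] [Nontrivial V]
    {a : V → E} (ha : Function.Injective a) {c : E} {r : ℝ} (hr : ∀ v, ‖a v - c‖ = r) : 0 < r := by
  obtain ⟨v, v', hvv'⟩ := exists_pair_ne V
  refine (hr v ▸ norm_nonneg _).lt_of_ne fun h => hvv' (ha ?_)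
  have hc (u : V) : a u = c := sub_eq_zero.1 (norm_eq_zero.1 ((hr u).trans h.symm))
  exact (hc v).trans (hc v').symm

theorem exists_center_of_dist_eq {E V W : Type*} [NormedAddCommGroup E] [InnerProductSpace ℝ E]
    [FiniteDimensional ℝ E] [Nonempty V] [Nonempty W] {a : V → E} {b : W → E} {ρ : ℝ}
    (hab : ∀ v w, dist (a v) (b w) = ρ) :
    ∃ c, (∀ v, a v - c ∈ vectorSpan ℝ (range a)) ∧ ∀ w, b w - c ∈ (vectorSpan ℝ (range a))ᗮ := by
  obtain ⟨v₀⟩ := ‹Nonempty V›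
  obtain ⟨w₀⟩ := ‹Nonempty W›
  have hUb : vectorSpan ℝ (range b) ⟂ vectorSpan ℝ (range a) := by
    rw [vectorSpan_def, vectorSpan_def, Submodule.isOrtho_span]
    rintro _ ⟨_, ⟨w, rfl⟩, _, ⟨w', rfl⟩, rfl⟩ _ ⟨_, ⟨v, rfl⟩, _, ⟨v', rfl⟩, rfl⟩
    rw [real_inner_comm]
    exact EuclideanGeometry.inner_vsub_vsub_of_dist_eq_of_dist_eq
      (by rw [dist_comm, hab, dist_comm, hab]) (by rw [dist_comm, hab, dist_comm, hab])
  set U := vectorSpan ℝ (range a)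
  refine ⟨a v₀ + U.starProjection (b w₀ - a v₀), fun v => ?_, fun w => ?_⟩
  · rw [← sub_sub]
    exact U.sub_mem (vsub_mem_vectorSpan ℝ (mem_range_self v) (mem_range_self v₀))
      (U.starProjection_apply_mem _)
  · have : b w - (a v₀ + U.starProjection (b w₀ - a v₀)) =
        (b w - b w₀) + ((b w₀ - a v₀) - U.starProjection (b w₀ - a v₀)) := by abel
    rw [this]
    exact Uᗮ.add_mem (hUb (vsub_mem_vectorSpan ℝ (mem_range_self w) (mem_range_self w₀)))
      (U.sub_starProjection_mem_orthogonal _)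

theorem IsUDEmbedding.hasSphericalEmbeddingRadius_finrank {V : Type*} {G : SimpleGraph V} {n : ℕ}
    {f : V → EuclideanSpace ℝ (Fin n)} (hf : IsUDEmbedding G f)
    {K : Submodule ℝ (EuclideanSpace ℝ (Fin n))} {c : EuclideanSpace ℝ (Fin n)} {r : ℝ}
    (hK : ∀ v, f v - c ∈ K) (hr : ∀ v, ‖f v - c‖ = r) :
    HasSphericalEmbeddingRadius G (Module.finrank ℝ K) r := by
  let e := (stdOrthonormalBasis ℝ K).repr
  let ψ : EuclideanSpace ℝ (Fin (Module.finrank ℝ K)) →ᵃⁱ[ℝ] EuclideanSpace ℝ (Fin n) :=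
    (AffineIsometryEquiv.vaddConst ℝ c).toAffineIsometry.comp
      (K.subtypeₗᵢ.comp e.symm.toLinearIsometry).toAffineIsometry
  let g v := e ⟨f v - c, hK v⟩
  have hψg : ψ ∘ g = f := by
    ext1 v
    simp [ψ, g]
  refine hasSphericalEmbeddingRadius_iff_exists_norm_eq.2
    ⟨g, ψ.isUDEmbedding_comp_iff.1 (hψg ▸ hf), fun v => ?_⟩
  simp [g, hr]

theorem IsUDEmbedding.exists_hasSphericalEmbeddingRadius_of_graphJoin {V W : Type*}
    [Nontrivial V] [Nontrivial W] {G : SimpleGraph V} {H : SimpleGraph W} {n : ℕ}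
    {F : V ⊕ W → EuclideanSpace ℝ (Fin n)} (hF : IsUDEmbedding (graphJoin G H) F) :
    ∃ (n₁ n₂ : ℕ) (r₁ r₂ : ℝ), n₁ + n₂ = n ∧ 0 < r₁ ∧ r₁ < 1 ∧ 0 < r₂ ∧ r₂ < 1 ∧
      r₁ ^ 2 + r₂ ^ 2 = 1 ∧
      HasSphericalEmbeddingRadius G n₁ r₁ ∧ HasSphericalEmbeddingRadius H n₂ r₂ := by
  set a := F ∘ Sum.inl
  set b := F ∘ Sum.inr
  have hab (v : V) (w : W) : dist (a v) (b w) = 1 := hF.2.1 graphJoin_adj_inl_inr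
  obtain ⟨c, ha, hb⟩ := exists_center_of_dist_eq hab
  set U := vectorSpan ℝ (range a)
  have hpyth (v : V) (w : W) : ‖a v - c‖ ^ 2 + ‖b w - c‖ ^ 2 = 1 := by
    have := norm_sub_sq_eq_norm_sq_add_norm_sq_real (U.inner_right_of_mem_orthogonal (ha v) (hb w))
    rw [sub_sub_sub_cancel_right, ← dist_eq_norm, hab] at this
    nlinarith
  obtain ⟨v₀⟩ := ‹Nontrivial V›.to_nonempty
  obtain ⟨w₀⟩ := ‹Nontrivial W›.to_nonempty
  have ha_norm (v : V) : ‖a v - c‖ = ‖a v₀ - c‖ :=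
    (sq_eq_sq₀ (norm_nonneg _) (norm_nonneg _)).1 (by linarith [hpyth v w₀, hpyth v₀ w₀])
  have hb_norm (w : W) : ‖b w - c‖ = ‖b w₀ - c‖ :=
    (sq_eq_sq₀ (norm_nonneg _) (norm_nonneg _)).1 (by linarith [hpyth v₀ w, hpyth v₀ w₀])
  have hr₁ := pos_of_injective_of_norm_sub_eq hF.graphJoin_inl.1 ha_norm
  have hr₂ := pos_of_injective_of_norm_sub_eq hF.graphJoin_inr.1 hb_norm
  have hr := hpyth v₀ w₀
  refine ⟨_, _, _, _, ?_, hr₁, by nlinarith, hr₂, by nlinarith, hr,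
    hF.graphJoin_inl.hasSphericalEmbeddingRadius_finrank ha ha_norm,
    hF.graphJoin_inr.hasSphericalEmbeddingRadius_finrank hb hb_norm⟩
  rw [U.finrank_add_finrank_orthogonal, finrank_euclideanSpace_fin]

/-- (i) If `G` and `H` (each with more than one vertex) embed on spheres of
radii `r₁, r₂ ∈ (0,1)` in `ℝ^{n₁}` and `ℝ^{n₂}` with `r₁² + r₂² = 1`, then `G + H` has a
unit-distance embedding in `ℝ^{n₁+n₂}`.  (ii) Conversely, if `G + H` embeds in `ℝⁿ` then
such `n₁, n₂` with `n₁ + n₂ = n` and radii `r₁, r₂` exist. -/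
theorem stmt6 {V W : Type} [Fintype V] [Fintype W] (G : SimpleGraph V) (H : SimpleGraph W)
    (hV : 1 < Fintype.card V) (hW : 1 < Fintype.card W) :
    (∀ (n₁ n₂ : ℕ) (r₁ r₂ : ℝ), 0 < r₁ → r₁ < 1 → 0 < r₂ → r₂ < 1 → r₁ ^ 2 + r₂ ^ 2 = 1 →
      HasSphericalEmbeddingRadius G n₁ r₁ → HasSphericalEmbeddingRadius H n₂ r₂ →
      HasUDEmbedding (graphJoin G H) (n₁ + n₂)) ∧
    (∀ n : ℕ, HasUDEmbedding (graphJoin G H) n →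
      ∃ (n₁ n₂ : ℕ) (r₁ r₂ : ℝ), n₁ + n₂ = n ∧ 0 < r₁ ∧ r₁ < 1 ∧ 0 < r₂ ∧ r₂ < 1 ∧
        r₁ ^ 2 + r₂ ^ 2 = 1 ∧
        HasSphericalEmbeddingRadius G n₁ r₁ ∧ HasSphericalEmbeddingRadius H n₂ r₂) := by
  have := Fintype.one_lt_card_iff_nontrivial.1 hV
  have := Fintype.one_lt_card_iff_nontrivial.1 hW
  exact ⟨fun _ _ _ _ hr₁ _ hr₂ _ hr => hasUDEmbedding_graphJoin hr₁ hr₂ hr,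
    fun _ ⟨_, hF⟩ => hF.exists_hasSphericalEmbeddingRadius_of_graphJoin⟩
end
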